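/- Let J ∈ ℕ, let a₁,…,a_J be nonzero real numbers and b₁,…,b_J > 0, and set θ(z,s) := Σ_{j=1}^J s^{-1/2} exp(-(z - a_j s)²/(b_j s)). Then there exists C > 0 such that for every f ∈ L¹(ℝ), every t > 0 and every x ∈ ℝ, ∫₀^t |∫_ℝ θ(x - y, s) f(y) dy| ds ≤ C ‖f‖_{L¹(ℝ)}. -/

import Mathlib

/-!
For fixed `z`, the inequality `a² s (√s - √(z/a))² ≤ (z - a s)²` dominates `θ(z, s)` by
`s^(-1/2) exp(-(a²/b) (√s - √(z/a))²)`, which the substitution `s = u²` turns into a Gaussian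
in `u`. Hence `∫₀^∞ θ(z, s) ds ≤ 2 √(π b / a²)` uniformly in `z`, and the `L¹` bound follows by
moving the absolute value inside the `y`-integral and exchanging the order of integration
(Tonelli).
-/

open MeasureTheory Real Set

theorem integral_abs_integral_mul_le {α β : Type*} [MeasurableSpace α] [MeasurableSpace β]
    {μ : Measure α} {ν : Measure β} [SFinite μ] [SFinite ν] {k : α → β → ℝ}
    (hk : Measurable (Function.uncurry k)) {C : ℝ} (hC : 0 ≤ C)
    (hkC : ∀ y, ∫⁻ s, ‖k s y‖ₑ ∂μ ≤ ENNReal.ofReal C) {f : β → ℝ} (hf : Integrable f ν) :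
    ∫ s, |∫ y, k s y * f y ∂ν| ∂μ ≤ C * ∫ y, |f y| ∂ν := by
  have hlin : ∫⁻ s, ‖∫ y, k s y * f y ∂ν‖ₑ ∂μ ≤ ENNReal.ofReal (C * ∫ y, |f y| ∂ν) :=
    calc ∫⁻ s, ‖∫ y, k s y * f y ∂ν‖ₑ ∂μ
        ≤ ∫⁻ s, ∫⁻ y, ‖k s y‖ₑ * ‖f y‖ₑ ∂ν ∂μ := by
          gcongr with s
          simpa only [enorm_mul] using enorm_integral_le_lintegral_enorm (fun y => k s y * f y)
      _ = ∫⁻ y, (∫⁻ s, ‖k s y‖ₑ ∂μ) * ‖f y‖ₑ ∂ν := by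
          rw [lintegral_lintegral_swap (hk.enorm.aemeasurable.mul
            hf.aestronglyMeasurable.enorm.comp_snd)]
          exact lintegral_congr fun y =>
            lintegral_mul_const'' _ hk.of_uncurry_right.enorm.aemeasurable
      _ ≤ ∫⁻ y, ENNReal.ofReal C * ‖f y‖ₑ ∂ν := by gcongr with y; exact hkC y
      _ = ENNReal.ofReal (C * ∫ y, |f y| ∂ν) := by
          rw [lintegral_const_mul' _ _ ENNReal.ofReal_ne_top, ENNReal.ofReal_mul hC,
            ← ofReal_integral_norm_eq_lintegral_enorm hf]
          rfl
  calc ∫ s, |∫ y, k s y * f y ∂ν| ∂μ ≤ ‖∫ s, |∫ y, k s y * f y ∂ν| ∂μ‖ := le_abs_self _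
    _ ≤ (∫⁻ s, ENNReal.ofReal ‖|∫ y, k s y * f y ∂ν|‖ ∂μ).toReal :=
        norm_integral_le_lintegral_norm _
    _ ≤ C * ∫ y, |f y| ∂ν := by
        simp only [norm_abs_eq_norm, ofReal_norm]
        exact ENNReal.toReal_le_of_le_ofReal (by positivity) hlin

/-- The kernel `θ(z, s)` for a single speed `a` and diffusion coefficient `b`. -/
noncomputable def movingGaussian (a b z s : ℝ) : ℝ :=
  s ^ (-(1:ℝ)/2) * exp (-(z - a * s) ^ 2 / (b * s))

theorem movingGaussian_nonneg (a b z : ℝ) {s : ℝ} (hs : 0 ≤ s) :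
    0 ≤ movingGaussian a b z s := by
  unfold movingGaussian; positivity

theorem sq_mul_mul_sq_sqrt_sub_sqrt_div_le (a z : ℝ) {s : ℝ} (hs : 0 ≤ s) :
    a ^ 2 * s * (√s - √(z / a)) ^ 2 ≤ (z - a * s) ^ 2 := by
  rcases eq_or_ne a 0 with rfl | ha
  · simpa using sq_nonneg z
  set q := √s
  have hqs : q ^ 2 = s := sq_sqrt hs
  rcases le_or_gt 0 (z / a) with hza | hza
  · -- with `z = a r²` the right side is `a² (q - r)² (q + r)²`
    set r := √(z / a)
    have hz : z = a * r ^ 2 := by rw [sq_sqrt hza]; field_simp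
    rw [hz, ← hqs]
    nlinarith [mul_nonneg (sq_nonneg (a * (q - r))) (by positivity : 0 ≤ r ^ 2 + 2 * q * r)]
  · have hza' : z * a ≤ 0 := by
      rw [show z * a = z / a * a ^ 2 by field_simp]
      exact mul_nonpos_of_nonpos_of_nonneg hza.le (sq_nonneg a)
    rw [sqrt_eq_zero'.mpr hza.le, sub_zero, hqs]
    nlinarith [mul_nonneg (neg_nonneg.mpr hza') hs, sq_nonneg z]

theorem movingGaussian_le (a z : ℝ) {b s : ℝ} (hb : 0 < b) (hs : 0 < s) :
    movingGaussian a b z s ≤ s ^ (-(1:ℝ)/2) * exp (-(a ^ 2 / b * (√s - √(z / a)) ^ 2)) := by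
  unfold movingGaussian
  gcongr
  rw [neg_div, neg_le_neg_iff, le_div_iff₀ (by positivity)]
  calc a ^ 2 / b * (√s - √(z / a)) ^ 2 * (b * s) = a ^ 2 * s * (√s - √(z / a)) ^ 2 := by
        field_simp
    _ ≤ (z - a * s) ^ 2 := sq_mul_mul_sq_sqrt_sub_sqrt_div_le a z hs.le

-- The Jacobian identity for the substitution `s = x²`.
theorem abs_two_mul_rpow_smul_rpow_neg_half_mul_comp_sqrt (g : ℝ → ℝ) {x : ℝ} (hx : 0 < x) :
    (|(2:ℝ)| * x ^ ((2:ℝ) - 1)) • ((x ^ (2:ℝ)) ^ (-(1:ℝ)/2) * g √(x ^ (2:ℝ))) = 2 * g x := by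
  have hsq : x ^ (2:ℝ) = x ^ 2 := rpow_two x
  have hinv : (x ^ (2:ℝ)) ^ (-(1:ℝ)/2) = x⁻¹ := by
    rw [← rpow_mul hx.le]; norm_num [rpow_neg_one]
  rw [hinv, hsq, sqrt_sq hx.le, smul_eq_mul, abs_two, show (2:ℝ) - 1 = 1 by norm_num, rpow_one]
  field_simp

theorem integrableOn_Ioi_rpow_neg_half_mul_comp_sqrt {g : ℝ → ℝ} (hg : IntegrableOn g (Ioi 0)) :
    IntegrableOn (fun s => s ^ (-(1:ℝ)/2) * g √s) (Ioi 0) := by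
  rw [← integrableOn_Ioi_comp_rpow_iff _ two_ne_zero]
  exact (integrableOn_congr_fun
    (fun x hx => abs_two_mul_rpow_smul_rpow_neg_half_mul_comp_sqrt g hx) measurableSet_Ioi).mpr
    (hg.const_mul 2)

theorem integral_Ioi_rpow_neg_half_mul_comp_sqrt (g : ℝ → ℝ) :
    ∫ s in Ioi 0, s ^ (-(1:ℝ)/2) * g √s = 2 * ∫ u in Ioi 0, g u := by
  rw [← integral_comp_rpow_Ioi _ two_ne_zero, ← integral_const_mul]
  exact setIntegral_congr_fun measurableSet_Ioi
    fun x hx => abs_two_mul_rpow_smul_rpow_neg_half_mul_comp_sqrt g hx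

theorem integrable_exp_neg_mul_sub_sq {α : ℝ} (hα : 0 < α) (r : ℝ) :
    Integrable fun u => exp (-(α * (u - r) ^ 2)) := by
  simpa only [neg_mul] using (integrable_exp_neg_mul_sq hα).comp_sub_right r

theorem integral_exp_neg_mul_sub_sq (α r : ℝ) :
    ∫ u, exp (-(α * (u - r) ^ 2)) = √(π / α) := by
  rw [integral_sub_right_eq_self (fun u => exp (-(α * u ^ 2))) r]
  simpa only [neg_mul] using integral_gaussian α

theorem lintegral_Ioi_enorm_movingGaussian_le {a b : ℝ} (ha : a ≠ 0) (hb : 0 < b) (z : ℝ) :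
    ∫⁻ s in Ioi 0, ‖movingGaussian a b z s‖ₑ ≤ ENNReal.ofReal (2 * √(π / (a ^ 2 / b))) := by
  have hα : 0 < a ^ 2 / b := by positivity
  set G : ℝ → ℝ := fun u => exp (-(a ^ 2 / b * (u - √(z / a)) ^ 2))
  have hG : Integrable G := integrable_exp_neg_mul_sub_sq hα _
  have hD := integrableOn_Ioi_rpow_neg_half_mul_comp_sqrt hG.integrableOn
  calc ∫⁻ s in Ioi 0, ‖movingGaussian a b z s‖ₑ
      ≤ ∫⁻ s in Ioi 0, ENNReal.ofReal (s ^ (-(1:ℝ)/2) * G √s) := by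
        refine setLIntegral_mono' measurableSet_Ioi fun s hs => ?_
        rw [Real.enorm_eq_ofReal (movingGaussian_nonneg a b z hs.le)]
        exact ENNReal.ofReal_le_ofReal (movingGaussian_le a z hb hs)
    _ = ENNReal.ofReal (2 * ∫ u in Ioi 0, G u) := by
        rw [← integral_Ioi_rpow_neg_half_mul_comp_sqrt, ofReal_integral_eq_lintegral_ofReal hD]
        exact ae_restrict_of_forall_mem measurableSet_Ioi fun s (hs : 0 < s) => by positivity
    _ ≤ ENNReal.ofReal (2 * √(π / (a ^ 2 / b))) := by
        rw [← integral_exp_neg_mul_sub_sq _ (√(z / a))]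
        refine ENNReal.ofReal_le_ofReal (mul_le_mul_of_nonneg_left ?_ zero_le_two)
        exact setIntegral_le_integral hG (ae_of_all _ fun u => (exp_pos _).le)

theorem lintegral_Ioi_enorm_sum_movingGaussian_le {ι : Type*} [Fintype ι] {a b : ι → ℝ}
    (ha : ∀ j, a j ≠ 0) (hb : ∀ j, 0 < b j) (z : ℝ) :
    ∫⁻ s in Ioi 0, ‖∑ j, movingGaussian (a j) (b j) z s‖ₑ ≤
      ENNReal.ofReal (∑ j, 2 * √(π / (a j ^ 2 / b j))) :=
  calc ∫⁻ s in Ioi 0, ‖∑ j, movingGaussian (a j) (b j) z s‖ₑ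
      ≤ ∫⁻ s in Ioi 0, ∑ j, ‖movingGaussian (a j) (b j) z s‖ₑ :=
        lintegral_mono fun s => enorm_sum_le _ _
    _ = ∑ j, ∫⁻ s in Ioi 0, ‖movingGaussian (a j) (b j) z s‖ₑ :=
        lintegral_finsetSum' _ fun j _ => by unfold movingGaussian; fun_prop
    _ ≤ ∑ j, ENNReal.ofReal (2 * √(π / (a j ^ 2 / b j))) :=
        Finset.sum_le_sum fun j _ => lintegral_Ioi_enorm_movingGaussian_le (ha j) (hb j) z
    _ = ENNReal.ofReal (∑ j, 2 * √(π / (a j ^ 2 / b j))) :=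
        (ENNReal.ofReal_sum_of_nonneg fun j _ => by positivity).symm

theorem gaussian_sum_aux1 (J : ℕ) (a b : Fin J → ℝ)
    (ha : ∀ j, a j ≠ 0) (hb : ∀ j, 0 < b j) :
    ∃ C : ℝ, 0 < C ∧ ∀ f : ℝ → ℝ, Integrable f → ∀ t : ℝ, 0 < t → ∀ x : ℝ,
      (∫ s in Ioc (0:ℝ) t,
        |∫ y : ℝ, (∑ j : Fin J,
            s ^ (-(1:ℝ)/2) * Real.exp (-((x - y) - a j * s)^2 / (b j * s))) * f y|)
        ≤ C * ∫ y : ℝ, |f y| := by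
  set C₀ := ∑ j, 2 * √(π / (a j ^ 2 / b j))
  have hC₀ : 0 ≤ C₀ := by positivity
  refine ⟨C₀ + 1, by positivity, fun f hf t _ x => ?_⟩
  have hθ : ∀ y, ∫⁻ s in Ioc 0 t, ‖∑ j, movingGaussian (a j) (b j) (x - y) s‖ₑ ≤
      ENNReal.ofReal C₀ := fun y =>
    (lintegral_mono_set Ioc_subset_Ioi_self).trans
      (lintegral_Ioi_enorm_sum_movingGaussian_le ha hb (x - y))
  calc _ ≤ C₀ * ∫ y, |f y| :=
        integral_abs_integral_mul_le (by unfold movingGaussian; fun_prop) hC₀ hθ hf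
    _ ≤ (C₀ + 1) * ∫ y, |f y| := by gcongr; linarith
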